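/- Let D = {a, b, c}, 𝓑 = {{[a,b],[a]}, {[b,c],[c]}}, and C₂ = { bᵐ·c·a·bⁿ : m, n ∈ ℕ }. A probability measure P supported in C₂ is 𝓑-Markov on D⁺ if and only if there exist r₁, r₂ ∈ (0,1) such that P(bᵐ·c·a·bⁿ) = r₁r₂(1−r₁)ᵐ(1−r₂)ⁿ for all m, n ∈ ℕ. -/

import Mathlib

/-!
The words `[0]` and `[0, 1]` (resp. `[2]` and `[1, 2]`) differ by one `b` after the `a`
(resp. before the `c`), so the Markov condition for the two blocks of `𝓑` says that adding a `b`
on the right of `bᵐ c a bⁿ` multiplies `P` by a constant `t > 0`, and adding one on the left by a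
constant `s > 0`. Hence `P (bᵐ c a bⁿ) = P (c a) sᵐ tⁿ`, and total mass `1` forces the double
geometric series to converge: `s, t < 1` and `P (c a) = (1 - s) (1 - t)`. Conversely, the
geometric law satisfies these ratio identities on `C₂`, and off `C₂` both sides vanish, since a
word of `C₂` containing `ab` (resp. `bc`) stays in `C₂` when that `b` is deleted.
-/

def IsMarkovSet {D : Type*} (𝒟 : Set (List D)) (P : List D → ℝ) (B : Set (List D)) : Prop :=
  ∃ β : List D → List D → ℝ,
    (∀ y ∈ B, ∀ y' ∈ B, β y y' = - β y' y) ∧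
    ∀ (x₁ x₂ : List D), ∀ y ∈ B, ∀ y' ∈ B,
      x₁ ++ y ++ x₂ ∈ 𝒟 → x₁ ++ y' ++ x₂ ∈ 𝒟 →
      P (x₁ ++ y' ++ x₂) = P (x₁ ++ y ++ x₂) * Real.exp (β y y')

/-- With `D = {a, b, c}` encoded as `Fin 3` (`a = 0`, `b = 1`, `c = 2`),
the string `bᵐ c a bⁿ`. -/
def wBCAB (m n : ℕ) : List (Fin 3) := List.replicate m 1 ++ [2, 0] ++ List.replicate n 1

/-- The component `C₂ = { bᵐ c a bⁿ : m, n ∈ ℕ }`. -/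
def C2 : Set (List (Fin 3)) := {s | ∃ m n, s = wBCAB m n}

/-- The family `𝓑 = { {ab, a}, {bc, c} }`. -/
def Bfam : Set (Set (List (Fin 3))) := {{[0, 1], [0]}, {[1, 2], [2]}}

/-- The domain `D⁺` of all nonempty strings. -/
def Dplus : Set (List (Fin 3)) := {s | s ≠ []}

open List Function

theorem isMarkovSet_pair_iff {D : Type*} {𝒟 : Set (List D)} {P : List D → ℝ} {y y' : List D} :
    IsMarkovSet 𝒟 P {y', y} ↔ ∃ q > 0, ∀ x₁ x₂ : List D,
      x₁ ++ y ++ x₂ ∈ 𝒟 → x₁ ++ y' ++ x₂ ∈ 𝒟 → P (x₁ ++ y' ++ x₂) = P (x₁ ++ y ++ x₂) * q := by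
  constructor
  · rintro ⟨β, -, hβ⟩
    exact ⟨Real.exp (β y y'), Real.exp_pos _, fun x₁ x₂ => hβ x₁ x₂ y (by simp) y' (by simp)⟩
  · rintro ⟨q, hq, h⟩
    classical
    let f : List D → ℝ := fun z => if z = y' then Real.log q else 0
    refine ⟨fun z z' => f z' - f z, fun _ _ _ _ => by ring, ?_⟩
    intro x₁ x₂ z hz z' hz' hz𝒟 hz'𝒟
    obtain rfl | hyy := eq_or_ne y y'
    · simp only [Set.mem_insert_iff, Set.mem_singleton_iff, or_self] at hz hz'
      simp [hz, hz']
    rcases hz with rfl | rfl <;> rcases hz' with rfl | rfl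
    · simp
    · simp only [f, if_pos rfl, if_neg hyy, zero_sub, Real.exp_neg, Real.exp_log hq,
        h x₁ x₂ hz'𝒟 hz𝒟]
      field_simp
    · simp only [f, if_pos rfl, if_neg hyy, sub_zero, Real.exp_log hq]
      exact h x₁ x₂ hz𝒟 hz'𝒟
    · simp

theorem apply_append_append_eq_mul_of_support_subset {D : Type*} {P : List D → ℝ}
    {S : Set (List D)} {y y' : List D} {q : ℝ} (hP : support P ⊆ S)
    (hS : ∀ x₁ x₂, x₁ ++ y' ++ x₂ ∈ S → x₁ ++ y ++ x₂ ∈ S)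
    (h : ∀ x₁ x₂, x₁ ++ y ++ x₂ ∈ S → P (x₁ ++ y' ++ x₂) = P (x₁ ++ y ++ x₂) * q)
    (x₁ x₂ : List D) : P (x₁ ++ y' ++ x₂) = P (x₁ ++ y ++ x₂) * q := by
  by_cases hx : x₁ ++ y ++ x₂ ∈ S
  · exact h x₁ x₂ hx
  · rw [notMem_support.1 fun h' => hx (hP h'), notMem_support.1 fun h' => hx (hS _ _ (hP h')),
      zero_mul]

theorem eq_mul_pow_mul_pow_of_succ {M : Type*} [Monoid M] {f : ℕ → ℕ → M} {s t : M}
    (hs : ∀ m, f (m + 1) 0 = f m 0 * s) (ht : ∀ m n, f m (n + 1) = f m n * t) (m n : ℕ) :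
    f m n = f 0 0 * s ^ m * t ^ n := by
  induction n with
  | zero =>
    induction m with
    | zero => simp
    | succ m ih => rw [hs, ih, pow_zero, mul_one, mul_one, pow_succ, mul_assoc]
  | succ n ih => rw [ht, ih, pow_succ, mul_assoc]

theorem eq_of_hasSum_mul_pow_mul_pow {c s t : ℝ} (hs : 0 < s) (ht : 0 < t)
    (h : HasSum (fun p : ℕ × ℕ => c * (s ^ p.1 * t ^ p.2)) 1) :
    s < 1 ∧ t < 1 ∧ c = (1 - s) * (1 - t) := by
  have hc : c ≠ 0 := by
    rintro rfl
    exact zero_ne_one (hasSum_zero.unique (by simpa using h))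
  have hprod : Summable fun p : ℕ × ℕ => s ^ p.1 * t ^ p.2 :=
    (summable_mul_left_iff hc).1 h.summable
  have hs1 : s < 1 := by
    simpa [comp_def, abs_of_pos hs] using hprod.comp_injective (Prod.mk_left_injective 0)
  have ht1 : t < 1 := by
    simpa [comp_def, abs_of_pos ht] using hprod.comp_injective (Prod.mk_right_injective 0)
  have hsum := ((hasSum_geometric_of_lt_one hs.le hs1).mul
    (hasSum_geometric_of_lt_one ht.le ht1) hprod).mul_left c
  have hs' : 1 - s ≠ 0 := by linarith
  have ht' : 1 - t ≠ 0 := by linarith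
  refine ⟨hs1, ht1, ?_⟩
  have := hsum.unique h
  field_simp at this
  linarith

theorem C2_eq_range : C2 = Set.range (uncurry wBCAB) := by
  ext s
  simp [C2, eq_comm]

theorem wBCAB_injective : Injective (uncurry wBCAB) := by
  rintro ⟨m, n⟩ ⟨m', n'⟩ h
  have h' : replicate m (1 : Fin 3) ++ 2 :: 0 :: replicate n 1 =
      replicate m' 1 ++ 2 :: 0 :: replicate n' 1 := by
    simpa [wBCAB] using h
  obtain ⟨hm, -, hn⟩ := (append_cons_inj_of_notMem (by simp) (by simp)).1 h'
  simp_all [replicate_left_injective 1 hm]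

theorem append_zero_append_eq_wBCAB (m n : ℕ) :
    replicate m 1 ++ [2] ++ [0] ++ replicate n 1 = wBCAB m n := by
  simp [wBCAB]

theorem append_zero_one_append_eq_wBCAB (m n : ℕ) :
    replicate m 1 ++ [2] ++ [0, 1] ++ replicate n 1 = wBCAB m (n + 1) := by
  simp [wBCAB, replicate_succ]

theorem append_two_append_eq_wBCAB (m n : ℕ) :
    replicate m 1 ++ [2] ++ 0 :: replicate n 1 = wBCAB m n := by
  simp [wBCAB]

theorem append_one_two_append_eq_wBCAB (m n : ℕ) :
    replicate m 1 ++ [1, 2] ++ 0 :: replicate n 1 = wBCAB (m + 1) n := by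
  simp [wBCAB, replicate_succ']

theorem append_zero_append_mem_C2_iff {x₁ x₂ : List (Fin 3)} :
    x₁ ++ [0] ++ x₂ ∈ C2 ↔ ∃ m n, x₁ = replicate m 1 ++ [2] ∧ x₂ = replicate n 1 := by
  refine exists₂_congr fun m n => ?_
  rw [← append_zero_append_eq_wBCAB, append_assoc, append_assoc, singleton_append,
    singleton_append, eq_comm, append_cons_inj_of_notMem (by simp) (by simp)]
  simp [eq_comm]

theorem append_two_append_mem_C2_iff {x₁ x₂ : List (Fin 3)} :
    x₁ ++ [2] ++ x₂ ∈ C2 ↔ ∃ m n, x₁ = replicate m 1 ∧ x₂ = 0 :: replicate n 1 := by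
  refine exists₂_congr fun m n => ?_
  rw [← append_two_append_eq_wBCAB, append_assoc, append_assoc, singleton_append,
    singleton_append, eq_comm, append_cons_inj_of_notMem (by simp) (by simp)]
  simp [eq_comm]

theorem append_zero_append_mem_C2_of_append_zero_one_append {x₁ x₂ : List (Fin 3)}
    (h : x₁ ++ [0, 1] ++ x₂ ∈ C2) : x₁ ++ [0] ++ x₂ ∈ C2 := by
  obtain ⟨m, n, rfl, hx₂⟩ := append_zero_append_mem_C2_iff.1 (by simpa using h :
    x₁ ++ [0] ++ 1 :: x₂ ∈ C2)
  cases n with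
  | zero => simp at hx₂
  | succ n => exact append_zero_append_mem_C2_iff.2 ⟨m, n, rfl, by simpa [replicate_succ] using hx₂⟩

theorem append_two_append_mem_C2_of_append_one_two_append {x₁ x₂ : List (Fin 3)}
    (h : x₁ ++ [1, 2] ++ x₂ ∈ C2) : x₁ ++ [2] ++ x₂ ∈ C2 := by
  obtain ⟨m, n, hx₁, rfl⟩ := append_two_append_mem_C2_iff.1 (by simpa using h :
    x₁ ++ [1] ++ [2] ++ x₂ ∈ C2)
  cases m with
  | zero => simp at hx₁
  | succ m =>
    exact append_two_append_mem_C2_iff.2 ⟨m, n, by simpa [replicate_succ'] using hx₁, rfl⟩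

theorem exists_geometric_of_isMarkovSet {P : List (Fin 3) → ℝ}
    (hP1 : ∑' s, P s = 1) (hPsupp : support P ⊆ C2)
    (hM : ∀ B ∈ Bfam, IsMarkovSet Dplus P B) :
    ∃ r₁ ∈ Set.Ioo (0 : ℝ) 1, ∃ r₂ ∈ Set.Ioo (0 : ℝ) 1,
      ∀ m n : ℕ, P (wBCAB m n) = r₁ * r₂ * (1 - r₁) ^ m * (1 - r₂) ^ n := by
  obtain ⟨t, ht, hab⟩ := isMarkovSet_pair_iff.1 (hM _ (Or.inl rfl))
  obtain ⟨s, hs, hbc⟩ := isMarkovSet_pair_iff.1 (hM _ (Or.inr rfl))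
  have hform : ∀ m n, P (wBCAB m n) = P (wBCAB 0 0) * s ^ m * t ^ n := by
    refine eq_mul_pow_mul_pow_of_succ (f := fun m n => P (wBCAB m n)) (fun m => ?_) fun m n => ?_
    · have := hbc (replicate m 1) (0 :: replicate 0 1) (by simp [Dplus]) (by simp [Dplus])
      rwa [append_one_two_append_eq_wBCAB, append_two_append_eq_wBCAB] at this
    · have := hab (replicate m 1 ++ [2]) (replicate n 1) (by simp [Dplus]) (by simp [Dplus])
      rwa [append_zero_one_append_eq_wBCAB, append_zero_append_eq_wBCAB] at this
  have hsum : HasSum P 1 := by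
    have hP : Summable P := by
      by_contra h
      rw [tsum_eq_zero_of_not_summable h] at hP1
      exact zero_ne_one hP1
    exact hP1 ▸ hP.hasSum
  have hsum₂ : HasSum (fun p : ℕ × ℕ => P (wBCAB 0 0) * (s ^ p.1 * t ^ p.2)) 1 := by
    rw [← wBCAB_injective.hasSum_iff fun x hx => notMem_support.1 fun h =>
      hx (C2_eq_range ▸ hPsupp h)] at hsum
    convert hsum using 2 with p
    rw [comp_apply, uncurry_apply_pair, hform p.1 p.2, mul_assoc]
  obtain ⟨hs1, ht1, hP00⟩ := eq_of_hasSum_mul_pow_mul_pow hs ht hsum₂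
  refine ⟨1 - s, ⟨by linarith, by linarith⟩, 1 - t, ⟨by linarith, by linarith⟩, fun m n => ?_⟩
  rw [hform, hP00]
  ring

theorem isMarkovSet_of_geometric {P : List (Fin 3) → ℝ} {r₁ r₂ : ℝ} (hPsupp : support P ⊆ C2)
    (hr₁ : r₁ < 1) (hr₂ : r₂ < 1)
    (hP : ∀ m n : ℕ, P (wBCAB m n) = r₁ * r₂ * (1 - r₁) ^ m * (1 - r₂) ^ n) :
    ∀ B ∈ Bfam, IsMarkovSet Dplus P B := by
  have hab : ∀ x₁ x₂, P (x₁ ++ [0, 1] ++ x₂) = P (x₁ ++ [0] ++ x₂) * (1 - r₂) :=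
    apply_append_append_eq_mul_of_support_subset hPsupp
      (fun _ _ => append_zero_append_mem_C2_of_append_zero_one_append) fun _ _ hx => by
        obtain ⟨m, n, rfl, rfl⟩ := append_zero_append_mem_C2_iff.1 hx
        rw [append_zero_one_append_eq_wBCAB, append_zero_append_eq_wBCAB, hP, hP]
        ring
  have hbc : ∀ x₁ x₂, P (x₁ ++ [1, 2] ++ x₂) = P (x₁ ++ [2] ++ x₂) * (1 - r₁) :=
    apply_append_append_eq_mul_of_support_subset hPsupp
      (fun _ _ => append_two_append_mem_C2_of_append_one_two_append) fun _ _ hx => by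
        obtain ⟨m, n, rfl, rfl⟩ := append_two_append_mem_C2_iff.1 hx
        rw [append_one_two_append_eq_wBCAB, append_two_append_eq_wBCAB, hP, hP]
        ring
  simp only [Bfam, Set.mem_insert_iff, Set.mem_singleton_iff, forall_eq_or_imp, forall_eq]
  exact ⟨isMarkovSet_pair_iff.2 ⟨1 - r₂, by linarith, fun x₁ x₂ _ _ => hab x₁ x₂⟩,
    isMarkovSet_pair_iff.2 ⟨1 - r₁, by linarith, fun x₁ x₂ _ _ => hbc x₁ x₂⟩⟩

theorem stmt16_general (P : List (Fin 3) → ℝ)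
    (hP1 : (∑' s : List (Fin 3), P s) = 1) (hPsupp : ∀ s, P s ≠ 0 → s ∈ C2) :
    (∀ B ∈ Bfam, IsMarkovSet Dplus P B) ↔
      ∃ r₁ ∈ Set.Ioo (0 : ℝ) 1, ∃ r₂ ∈ Set.Ioo (0 : ℝ) 1,
        ∀ m n : ℕ, P (wBCAB m n) = r₁ * r₂ * (1 - r₁) ^ m * (1 - r₂) ^ n := by
  refine ⟨exists_geometric_of_isMarkovSet hP1 hPsupp, ?_⟩
  rintro ⟨r₁, hr₁, r₂, hr₂, hP⟩
  exact isMarkovSet_of_geometric hPsupp hr₁.2 hr₂.2 hP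

theorem stmt16 (P : List (Fin 3) → ℝ) (hP0 : ∀ s, 0 ≤ P s)
    (hP1 : (∑' s : List (Fin 3), P s) = 1) (hPsupp : ∀ s, P s ≠ 0 → s ∈ C2) :
    (∀ B ∈ Bfam, IsMarkovSet Dplus P B) ↔
      ∃ r₁ ∈ Set.Ioo (0 : ℝ) 1, ∃ r₂ ∈ Set.Ioo (0 : ℝ) 1,
        ∀ m n : ℕ, P (wBCAB m n) = r₁ * r₂ * (1 - r₁) ^ m * (1 - r₂) ^ n :=
  stmt16_general P hP1 hPsupp
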